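/- arXiv:2512.24491 — 2 statements merged into one kernel-verified Lean document; each statement's English description precedes it below -/
import Mathlib

section
/- Let n ≥ 1, let Q be an n×n real matrix with nonnegative entries and zero diagonal, and let x ∈ ℝⁿ be such that the jump system JS(x) has at least one nonnegative solution. Then there exists a unique solution z* of JS(x) that is minimal with respect to the componentwise partial order: z* solves JS(x), and every nonnegative solution z of JS(x) satisfies z* ≤ z componentwise. -/
/-!
The solutions of JS(x) are the fixed points of the map `T z = (x − Q' z)₋` (with `Q'` the
off-diagonal part of `Q`), which is monotone because `Q ≥ 0` and takes only nonnegative values.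
Tarski's argument then goes through in the conditionally complete lattice `ℝⁿ`: the prefixed
points `T z ≤ z` form a set that contains any solution and is bounded below by `0`, and its
infimum is the least fixed point. A least element is unique.
-/

open Matrix Finset Filter

/-- Negative part: `(a)₋ = max(0, −a)`. -/
noncomputable def nPart (a : ℝ) : ℝ := max 0 (-a)

/-- The jump system JS(x): `z i = (x i − ∑_{j ≠ i} Q i j * z j)₋` for all `i`. -/
noncomputable def JS {n : ℕ} (Q : Matrix (Fin n) (Fin n) ℝ) (x z : Fin n → ℝ) : Prop :=
  ∀ i, z i = nPart (x i - ∑ j ∈ Finset.univ.erase i, Q i j * z j)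

/-- The cone `C = {u : u ≥ 0 and uᵀ(I − Q) ≤ 0 componentwise}`. -/
def coneC {n : ℕ} (Q : Matrix (Fin n) (Fin n) ℝ) : Set (Fin n → ℝ) :=
  {u | (∀ i, 0 ≤ u i) ∧ ∀ j, Matrix.vecMul u (1 - Q) j ≤ 0}

/-- The dual cone `C* = {y : uᵀ y ≥ 0 for all u ∈ C}`. -/
def dualConeC {n : ℕ} (Q : Matrix (Fin n) (Fin n) ℝ) : Set (Fin n → ℝ) :=
  {y | ∀ u ∈ coneC Q, 0 ≤ ∑ i, u i * y i}

/-- The feasible set `F(x) = {z : z ≥ 0 and (I − Q) z ≥ −x componentwise}`. -/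
def feas {n : ℕ} (Q : Matrix (Fin n) (Fin n) ℝ) (x : Fin n → ℝ) : Set (Fin n → ℝ) :=
  {z | (∀ i, 0 ≤ z i) ∧ ∀ i, -(x i) ≤ Matrix.mulVec (1 - Q) z i}

open Function

section FixedPoints

variable {α : Type*} [ConditionallyCompleteLattice α] {f : α → α}

theorem Monotone.isLeast_fixedPoints_csInf (hf : Monotone f) {a b : α} (ha : ∀ y, a ≤ f y)
    (hb : f b ≤ b) : IsLeast (fixedPoints f) (sInf {y | f y ≤ y}) := by
  set S := {y | f y ≤ y}
  have hSbdd : BddBelow S := ⟨a, fun y hy => (ha y).trans hy⟩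
  have hle : f (sInf S) ≤ sInf S :=
    le_csInf ⟨b, hb⟩ fun y hy => (hf (csInf_le hSbdd hy)).trans hy
  have hge : sInf S ≤ f (sInf S) := csInf_le hSbdd (hf hle)
  exact ⟨le_antisymm hle hge, fun y hy => csInf_le hSbdd hy.le⟩

end FixedPoints

section JumpSystem

variable {n : ℕ} (Q : Matrix (Fin n) (Fin n) ℝ) (x : Fin n → ℝ)

noncomputable def jsMap (z : Fin n → ℝ) : Fin n → ℝ :=
  fun i => nPart (x i - ∑ j ∈ univ.erase i, Q i j * z j)

theorem nPart_nonneg (a : ℝ) : 0 ≤ nPart a := le_max_left _ _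

theorem nPart_antitone : Antitone nPart := fun _ _ h => max_le_max le_rfl (neg_le_neg h)

theorem jsMap_nonneg (z : Fin n → ℝ) : 0 ≤ jsMap Q x z := fun _ => nPart_nonneg _

theorem jsMap_monotone (hQ : ∀ i j, 0 ≤ Q i j) : Monotone (jsMap Q x) := fun _ _ h i =>
  nPart_antitone <| sub_le_sub_left
    (sum_le_sum fun j _ => mul_le_mul_of_nonneg_left (h j) (hQ i j)) _

theorem JS_iff_isFixedPt (z : Fin n → ℝ) : JS Q x z ↔ IsFixedPt (jsMap Q x) z := by
  rw [IsFixedPt, funext_iff]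
  exact forall_congr' fun _ => eq_comm

theorem nonneg_and_JS_iff_mem_fixedPoints (z : Fin n → ℝ) :
    ((∀ i, 0 ≤ z i) ∧ JS Q x z) ↔ z ∈ fixedPoints (jsMap Q x) := by
  rw [JS_iff_isFixedPt]
  refine ⟨And.right, fun hz => ⟨fun i => ?_, hz⟩⟩
  rw [← hz]
  exact jsMap_nonneg Q x z i

end JumpSystem

theorem js_unique_minimal_solution_general {n : ℕ}
    (Q : Matrix (Fin n) (Fin n) ℝ)
    (hQnonneg : ∀ i j, 0 ≤ Q i j)
    (x : Fin n → ℝ)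
    (hsol : ∃ z : Fin n → ℝ, (∀ i, 0 ≤ z i) ∧ JS Q x z) :
    ∃! zstar : Fin n → ℝ, ((∀ i, 0 ≤ zstar i) ∧ JS Q x zstar) ∧
      ∀ z : Fin n → ℝ, (∀ i, 0 ≤ z i) → JS Q x z → ∀ i, zstar i ≤ z i := by
  obtain ⟨z₀, hz₀⟩ := hsol
  have hleast := (jsMap_monotone Q x hQnonneg).isLeast_fixedPoints_csInf (jsMap_nonneg Q x)
    ((nonneg_and_JS_iff_mem_fixedPoints Q x z₀).1 hz₀).le
  have hS : {z | (∀ i, 0 ≤ z i) ∧ JS Q x z} = fixedPoints (jsMap Q x) :=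
    Set.ext (nonneg_and_JS_iff_mem_fixedPoints Q x)
  rw [← hS] at hleast
  refine ⟨_, ⟨hleast.1, fun z hz hJS => hleast.2 ⟨hz, hJS⟩⟩, fun y hy => ?_⟩
  exact IsLeast.unique ⟨hy.1, fun z hz => hy.2 z hz.1 hz.2⟩ hleast

/-- Theorem 2.1 (uniqueness of the minimal jump): if JS(x) has a nonnegative solution,
then it has a unique minimal solution with respect to the componentwise order. -/
theorem js_unique_minimal_solution {n : ℕ} (hn : 1 ≤ n)
    (Q : Matrix (Fin n) (Fin n) ℝ)
    (hQnonneg : ∀ i j, 0 ≤ Q i j) (hQdiag : ∀ i, Q i i = 0)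
    (x : Fin n → ℝ)
    (hsol : ∃ z : Fin n → ℝ, (∀ i, 0 ≤ z i) ∧ JS Q x z) :
    ∃! zstar : Fin n → ℝ, ((∀ i, 0 ≤ zstar i) ∧ JS Q x zstar) ∧
      ∀ z : Fin n → ℝ, (∀ i, 0 ≤ z i) → JS Q x z → ∀ i, zstar i ≤ z i :=
  js_unique_minimal_solution_general Q hQnonneg x hsol
end

section
/- Let n ≥ 1, let Q be an n×n real matrix with nonnegative entries and zero diagonal, let x ∈ ℝⁿ, and suppose the feasible set F(x) is nonempty. Then F(x) has a least element z* with respect to the componentwise partial order (z* ∈ F(x) and z* ≤ z componentwise for all z ∈ F(x)), and this least element solves the jump system JS(x): z*_i = ( x_i − Σ_{j≠i} q_{ij} z*_j )_{-} for all 1 ≤ i ≤ n. -/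
open Matrix Finset Filter

/-!
Both `F(x)` and the jump system are governed by the monotone map `G z = (Q z − x)⁺`:
`F(x)` is the set of its pre-fixed points `G z ≤ z`, and a solution of `JS(x)` is exactly a fixed
point of `G` (the diagonal of `Q` vanishes). As in the Knaster–Tarski theorem, the componentwise
infimum of the pre-fixed points is again one and is a fixed point; completeness is replaced by
the lower bound `0` of `F(x)`.
-/

section PrefixedPoints

variable {α : Type*} [ConditionallyCompleteLattice α] {f : α → α}

theorem Monotone.isLeast_csInf_setOf_map_le (hf : Monotone f) (hne : {a | f a ≤ a}.Nonempty)
    (hbdd : BddBelow {a | f a ≤ a}) : IsLeast {a | f a ≤ a} (sInf {a | f a ≤ a}) :=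
  ⟨le_csInf hne fun _ ha => (hf (csInf_le hbdd ha)).trans ha, fun _ ha => csInf_le hbdd ha⟩

theorem Monotone.map_csInf_setOf_map_le (hf : Monotone f) (hne : {a | f a ≤ a}.Nonempty)
    (hbdd : BddBelow {a | f a ≤ a}) : f (sInf {a | f a ≤ a}) = sInf {a | f a ≤ a} := by
  have hpre := (hf.isLeast_csInf_setOf_map_le hne hbdd).1
  exact le_antisymm hpre (csInf_le hbdd (hf hpre))

end PrefixedPoints

section JumpMap

variable {ι : Type*} [Fintype ι]

def jumpMap (Q : Matrix ι ι ℝ) (x z : ι → ℝ) : ι → ℝ := 0 ⊔ (Q *ᵥ z - x)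

theorem jumpMap_monotone {Q : Matrix ι ι ℝ} (hQ : ∀ i j, 0 ≤ Q i j) (x : ι → ℝ) :
    Monotone (jumpMap Q x) := fun _ _ hzw =>
  sup_le_sup_left (sub_le_sub_right (fun i =>
    Finset.sum_le_sum fun j _ => mul_le_mul_of_nonneg_left (hzw j) (hQ i j)) x) 0

end JumpMap

theorem feas_eq_setOf_jumpMap_le {n : ℕ} (Q : Matrix (Fin n) (Fin n) ℝ) (x : Fin n → ℝ) :
    feas Q x = {z | jumpMap Q x z ≤ z} := by
  ext z
  simp only [feas, jumpMap, Set.mem_ofPred_eq, sup_le_iff, Pi.le_def, Pi.zero_apply,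
    Pi.sub_apply, sub_mulVec, one_mulVec]
  refine and_congr_right fun _ => forall_congr' fun i => ?_
  constructor <;> intro h <;> linarith

theorem JS_iff_jumpMap_eq {n : ℕ} {Q : Matrix (Fin n) (Fin n) ℝ} (hQ : ∀ i, Q i i = 0)
    (x z : Fin n → ℝ) : JS Q x z ↔ jumpMap Q x z = z := by
  have hdiag (i : Fin n) : ∑ j ∈ univ.erase i, Q i j * z j = (Q *ᵥ z) i :=
    Finset.sum_erase _ (by simp [hQ i])
  simp only [JS, nPart, hdiag, funext_iff, jumpMap, Pi.sup_apply, Pi.zero_apply, Pi.sub_apply,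
    neg_sub, eq_comm]

theorem feas_least_element_solves_js_general {n : ℕ}
    (Q : Matrix (Fin n) (Fin n) ℝ)
    (hQnonneg : ∀ i j, 0 ≤ Q i j) (hQdiag : ∀ i, Q i i = 0)
    (x : Fin n → ℝ) (hne : (feas Q x).Nonempty) :
    ∃ zstar : Fin n → ℝ, zstar ∈ feas Q x ∧
      (∀ z ∈ feas Q x, ∀ i, zstar i ≤ z i) ∧ JS Q x zstar := by
  have hG := jumpMap_monotone hQnonneg x
  rw [feas_eq_setOf_jumpMap_le] at hne ⊢
  have hbdd : BddBelow {z | jumpMap Q x z ≤ z} :=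
    ⟨0, fun _ hz => le_sup_left.trans (hz : jumpMap Q x _ ≤ _)⟩
  obtain ⟨hmem, hleast⟩ := hG.isLeast_csInf_setOf_map_le hne hbdd
  exact ⟨_, hmem, fun z hz => hleast hz,
    (JS_iff_jumpMap_eq hQdiag x _).2 (hG.map_csInf_setOf_map_le hne hbdd)⟩

/-- If `F(x)` is nonempty then it has a least element with respect to the componentwise
order, and this least element solves the jump system JS(x). -/
theorem feas_least_element_solves_js {n : ℕ} (hn : 1 ≤ n)
    (Q : Matrix (Fin n) (Fin n) ℝ)
    (hQnonneg : ∀ i j, 0 ≤ Q i j) (hQdiag : ∀ i, Q i i = 0)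
    (x : Fin n → ℝ) (hne : (feas Q x).Nonempty) :
    ∃ zstar : Fin n → ℝ, zstar ∈ feas Q x ∧
      (∀ z ∈ feas Q x, ∀ i, zstar i ≤ z i) ∧ JS Q x zstar :=
  feas_least_element_solves_js_general Q hQnonneg hQdiag x hne
end
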